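/- arXiv:2012.07174 — 6 statements merged into one kernel-verified Lean document; each statement's English description precedes it below -/
import Mathlib

section
/- Let H be a real separable Hilbert space, let B and D be bounded linear operators on H, and define Q(t) = ∫₀ᵗ e^{rD*} ∘ B ∘ e^{rD} dr, where e^{rD} is the operator exponential and D* the adjoint of D. Then for all t, s ≥ 0 one has the flow identity Q(t+s) = Q(s) + e^{sD*} ∘ Q(t) ∘ e^{sD}. -/
/-!
The integrand `f r = e^{r D*} B e^{r D}` is an orbit of the conjugation semigroup:
`f (r + s) = e^{s D*} (f r) e^{s D}`. Splitting `∫₀^{t+s}` at `s` and translating the second piece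
back to `[0, t]` therefore gives `∫₀^{t+s} f = ∫₀^s f + e^{s D*} (∫₀^t f) e^{s D}`, since the
bounded linear map `X ↦ e^{s D*} X e^{s D}` commutes with the integral.
-/

open NormedSpace

theorem intervalIntegral.integral_zero_add_of_comp_add_eq_map
    {E : Type*} [NormedAddCommGroup E] [NormedSpace ℝ E] [CompleteSpace E]
    {f : ℝ → E} (hf : Continuous f) (T : E →L[ℝ] E) {s : ℝ} (hT : ∀ r, f (r + s) = T (f r))
    (t : ℝ) : ∫ r in (0 : ℝ)..t + s, f r = (∫ r in (0 : ℝ)..s, f r) + T (∫ r in (0 : ℝ)..t, f r) := by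
  have hsplit : ∫ r in (0 : ℝ)..t + s, f r = (∫ r in (0 : ℝ)..s, f r) + ∫ r in s..t + s, f r :=
    (integral_add_adjacent_intervals (hf.intervalIntegrable _ _)
      (hf.intervalIntegrable _ _)).symm
  have hshift : ∫ r in s..t + s, f r = ∫ r in (0 : ℝ)..t, f (r + s) := by
    rw [integral_comp_add_right, zero_add]
  rw [hsplit, hshift, funext hT, T.intervalIntegral_comp_comm (hf.intervalIntegrable _ _)]

section BanachAlgebra

variable {𝔸 : Type*} [NormedRing 𝔸] [NormedAlgebra ℝ 𝔸] [CompleteSpace 𝔸]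

theorem NormedSpace.exp_add_smul (r s : ℝ) (a : 𝔸) :
    exp ((r + s) • a) = exp (r • a) * exp (s • a) := by
  let : NormedAlgebra ℚ 𝔸 := .restrictScalars ℚ ℝ 𝔸
  rw [add_smul]
  exact exp_add_of_commute (((Commute.refl a).smul_left r).smul_right s)

theorem NormedSpace.continuous_exp_smul (a : 𝔸) : Continuous fun r : ℝ => exp (r • a) := by
  let : NormedAlgebra ℚ 𝔸 := .restrictScalars ℚ ℝ 𝔸
  exact exp_continuous.comp (continuous_id.smul continuous_const)

theorem NormedSpace.exp_smul_mul_mul_exp_smul_add (a b c : 𝔸) (r s : ℝ) :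
    exp ((r + s) • a) * b * exp ((r + s) • c)
      = exp (s • a) * (exp (r • a) * b * exp (r • c)) * exp (s • c) := by
  rw [add_comm r s, exp_add_smul, add_comm s r, exp_add_smul]
  noncomm_ring

theorem NormedSpace.integral_exp_smul_mul_mul_exp_smul_add (a b c : 𝔸) (t s : ℝ) :
    ∫ r in (0 : ℝ)..t + s, exp (r • a) * b * exp (r • c)
      = (∫ r in (0 : ℝ)..s, exp (r • a) * b * exp (r • c))
        + exp (s • a) * (∫ r in (0 : ℝ)..t, exp (r • a) * b * exp (r • c)) * exp (s • c) :=
  intervalIntegral.integral_zero_add_of_comp_add_eq_map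
    (((continuous_exp_smul a).mul continuous_const).mul (continuous_exp_smul c))
    (ContinuousLinearMap.mulLeftRight ℝ 𝔸 (exp (s • a)) (exp (s • c)))
    (fun r => exp_smul_mul_mul_exp_smul_add a b c r s) t

end BanachAlgebra

theorem covariance_flow_identity_general
    {H : Type*} [NormedAddCommGroup H] [InnerProductSpace ℝ H] [CompleteSpace H]
    (B D : H →L[ℝ] H)
    (Q : ℝ → (H →L[ℝ] H))
    (hQ : Q = fun t => ∫ r in (0:ℝ)..t,
      NormedSpace.exp (r • ContinuousLinearMap.adjoint D) ∘L B ∘L NormedSpace.exp (r • D)) :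
    ∀ t s : ℝ, 0 ≤ t → 0 ≤ s →
      Q (t + s) = Q s +
        NormedSpace.exp (s • ContinuousLinearMap.adjoint D) ∘L Q t ∘L
          NormedSpace.exp (s • D) := by
  intro t s _ _
  subst hQ
  -- `∘L` is definitionally the multiplication of the Banach algebra `H →L[ℝ] H`
  exact integral_exp_smul_mul_mul_exp_smul_add (ContinuousLinearMap.adjoint D) B D t s

/-- **Flow identity for the covariance operator (Theorems 2–3 of the paper).**
For bounded operators `B`, `D` on a real separable Hilbert space,
`Q(t) = ∫₀ᵗ e^{rD*} ∘ B ∘ e^{rD} dr` satisfies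
`Q(t+s) = Q(s) + e^{sD*} ∘ Q(t) ∘ e^{sD}` for all `t, s ≥ 0`. -/
theorem covariance_flow_identity
    {H : Type*} [NormedAddCommGroup H] [InnerProductSpace ℝ H] [CompleteSpace H]
    [TopologicalSpace.SeparableSpace H]
    (B D : H →L[ℝ] H)
    (Q : ℝ → (H →L[ℝ] H))
    (hQ : Q = fun t => ∫ r in (0:ℝ)..t,
      NormedSpace.exp (r • ContinuousLinearMap.adjoint D) ∘L B ∘L NormedSpace.exp (r • D)) :
    ∀ t s : ℝ, 0 ≤ t → 0 ≤ s →
      Q (t + s) = Q s +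
        NormedSpace.exp (s • ContinuousLinearMap.adjoint D) ∘L Q t ∘L
          NormedSpace.exp (s • D) :=
  covariance_flow_identity_general B D Q hQ
end

section
/- Let H be a real separable Hilbert space and let B, C be bounded linear operators on H with B∘C = C∘B. For t ∈ ℝ set ch(t) = ∑_{n=0}^∞ t^{2n}(C∘B)ⁿ/(2n)! and sh(t) = ∑_{n=0}^∞ t^{2n+1}(C∘B)ⁿ/(2n+1)!, and assume that ch(t) is invertible (a unit in the algebra of bounded operators) for every t. Define Q(t) = sh(t) ∘ ch(t)⁻¹ ∘ B. Then Q(0) = 0 and t ↦ Q(t) is differentiable with Q'(t) = B − Q(t) ∘ C ∘ Q(t) for all t. -/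
/-!
Differentiating the series termwise gives `sh' = ch` and `ch' = sh * (C B)`, the operator forms of
`d/dt (sinh (t x) / x) = cosh (t x)` and `d/dt cosh (t x) = x² · sinh (t x) / x` with `x² = C B`.
With `(ch⁻¹)' = -ch⁻¹ ch' ch⁻¹`, the product rule gives `Q' = ch ch⁻¹ B - sh ch⁻¹ (sh C B) ch⁻¹ B`,
and since `C B = B C` commutes with `sh`, the second term is `Q C Q`.
-/

open Nat

lemma norm_pow_le_of_norm_one_le {R : Type*} [NormedRing R] (h1 : ‖(1 : R)‖ ≤ 1) (a : R)
    (n : ℕ) : ‖a ^ n‖ ≤ ‖a‖ ^ n := by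
  cases n with
  | zero => simpa using h1
  | succ n => exact norm_pow_le' a n.succ_pos

section HyperbolicSeries

variable {R : Type*} [NormedRing R] [NormedAlgebra ℝ R]

/-- With `a = x ^ 2` this is `cosh (t * x)` for `k = 0` and `sinh (t * x) / x` for `k = 1`. -/
noncomputable def hyperbolicSeries (a : R) (k : ℕ) (t : ℝ) : R :=
  ∑' n : ℕ, (t ^ (2 * n + k) / ((2 * n + k)! : ℝ)) • a ^ n

lemma norm_hyperbolicSeries_term_le (h1 : ‖(1 : R)‖ ≤ 1) (a : R) {r y : ℝ} (hy : |y| ≤ r)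
    (k n : ℕ) :
    ‖(y ^ (2 * n + k) / ((2 * n + k)! : ℝ)) • a ^ n‖ ≤ r ^ k * ((r ^ 2 * ‖a‖) ^ n / n !) := by
  have hr : 0 ≤ r := (abs_nonneg y).trans hy
  have hfac : (n ! : ℝ) ≤ (2 * n + k)! := by exact_mod_cast Nat.factorial_le (by omega)
  calc ‖(y ^ (2 * n + k) / ((2 * n + k)! : ℝ)) • a ^ n‖
      = |y| ^ (2 * n + k) / (2 * n + k)! * ‖a ^ n‖ := by
        rw [norm_smul, norm_div, norm_pow, Real.norm_eq_abs, RCLike.norm_natCast]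
    _ ≤ r ^ (2 * n + k) / n ! * ‖a‖ ^ n := by
        gcongr
        exact norm_pow_le_of_norm_one_le h1 a n
    _ = r ^ k * ((r ^ 2 * ‖a‖) ^ n / n !) := by ring

lemma hasDerivAt_hyperbolicSeries_term (a : R) (k n : ℕ) (y : ℝ) :
    HasDerivAt (fun y : ℝ => (y ^ (2 * n + (k + 1)) / ((2 * n + (k + 1))! : ℝ)) • a ^ n)
      ((y ^ (2 * n + k) / ((2 * n + k)! : ℝ)) • a ^ n) y := by
  convert ((hasDerivAt_pow (2 * n + (k + 1)) y).div_const ((2 * n + (k + 1))! : ℝ)).smul_const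
    (a ^ n) using 1
  congr 1
  rw [← add_assoc, Nat.factorial_succ, Nat.add_sub_cancel]
  push_cast
  field_simp

lemma commute_hyperbolicSeries (a : R) (k : ℕ) (t : ℝ) : Commute a (hyperbolicSeries a k t) :=
  .tsum_right _ fun n => ((Commute.refl a).pow_right n).smul_right _

variable [CompleteSpace R]

lemma summable_hyperbolicSeries_term (h1 : ‖(1 : R)‖ ≤ 1) (a : R) (k : ℕ) (t : ℝ) :
    Summable fun n : ℕ => (t ^ (2 * n + k) / ((2 * n + k)! : ℝ)) • a ^ n :=
  .of_norm_bounded ((Real.summable_pow_div_factorial _).mul_left _)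
    (norm_hyperbolicSeries_term_le h1 a le_rfl k)

theorem hasDerivAt_hyperbolicSeries_succ (h1 : ‖(1 : R)‖ ≤ 1) (a : R) (k : ℕ) (t : ℝ) :
    HasDerivAt (hyperbolicSeries a (k + 1)) (hyperbolicSeries a k t) t := by
  set r := |t| + 1
  have ht : t ∈ Set.Ioo (-r) r := abs_lt.mp (lt_add_one _)
  exact hasDerivAt_tsum_of_isPreconnected ((Real.summable_pow_div_factorial _).mul_left (r ^ k))
    isOpen_Ioo isPreconnected_Ioo (fun n y _ => hasDerivAt_hyperbolicSeries_term a k n y)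
    (fun n y hy => norm_hyperbolicSeries_term_le h1 a (abs_lt.mpr hy).le k n) ht
    (summable_hyperbolicSeries_term h1 a (k + 1) t) ht

lemma hyperbolicSeries_eq_add (h1 : ‖(1 : R)‖ ≤ 1) (a : R) (k : ℕ) (t : ℝ) :
    hyperbolicSeries a k t = (t ^ k / (k ! : ℝ)) • 1 + hyperbolicSeries a (k + 2) t * a := by
  rw [hyperbolicSeries, (summable_hyperbolicSeries_term h1 a k t).tsum_eq_zero_add,
    hyperbolicSeries, ← (summable_hyperbolicSeries_term h1 a (k + 2) t).tsum_mul_right]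
  congr 1
  · simp
  · refine tsum_congr fun n => ?_
    rw [smul_mul_assoc, ← pow_succ, show 2 * (n + 1) + k = 2 * n + (k + 2) by ring]

theorem hasDerivAt_hyperbolicSeries_zero (h1 : ‖(1 : R)‖ ≤ 1) (a : R) (t : ℝ) :
    HasDerivAt (hyperbolicSeries a 0) (hyperbolicSeries a 1 t * a) t := by
  have h : hyperbolicSeries a 0 = fun s => 1 + hyperbolicSeries a 2 s * a := by
    funext s
    simpa using hyperbolicSeries_eq_add h1 a 0 s
  rw [h]
  exact ((hasDerivAt_hyperbolicSeries_succ h1 a 1 t).mul_const a).const_add 1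

end HyperbolicSeries

section Riccati

variable {𝕜 : Type*} [NontriviallyNormedField 𝕜]
  {R : Type*} [NormedRing R] [HasSummableGeomSeries R] [NormedAlgebra 𝕜 R]

theorem HasDerivAt.ringInverse {c : 𝕜 → R} {c' : R} {t : 𝕜} (hc : HasDerivAt c c' t)
    (hu : IsUnit (c t)) :
    HasDerivAt (fun s => Ring.inverse (c s))
      (-(Ring.inverse (c t) * c' * Ring.inverse (c t))) t := by
  obtain ⟨u, hu⟩ := hu
  have h := (hasFDerivAt_ringInverse (𝕜 := 𝕜) u).comp_hasDerivAt_of_eq t hc hu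
  rw [← hu, Ring.inverse_unit]
  exact h

theorem hasDerivAt_riccati {s c : 𝕜 → R} {a b d : R} {t : 𝕜} (hs : HasDerivAt s (c t) t)
    (hc : HasDerivAt c (s t * a) t) (hu : IsUnit (c t)) (hbd : b * d = a)
    (ha : Commute a (s t)) :
    HasDerivAt (fun t => s t * Ring.inverse (c t) * b)
      (b - s t * Ring.inverse (c t) * b * d * (s t * Ring.inverse (c t) * b)) t := by
  convert (hs.fun_mul (hc.ringInverse hu)).mul_const b using 1
  set I := Ring.inverse (c t)
  have hcI : c t * I = 1 := Ring.mul_inverse_cancel _ hu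
  calc b - s t * I * b * d * (s t * I * b) = c t * I * b - s t * I * (b * d * s t) * I * b := by
        simp only [hcI, one_mul, mul_assoc]
    _ = (c t * I + s t * -(I * (s t * a) * I)) * b := by
        rw [hbd, ha.eq]
        noncomm_ring

end Riccati

theorem riccati_solution_Q_component_general
    {H : Type*} [NormedAddCommGroup H] [InnerProductSpace ℝ H] [CompleteSpace H]
    (B C : H →L[ℝ] H) (hBC : B ∘L C = C ∘L B)
    (ch sh : ℝ → (H →L[ℝ] H))
    (hch : ch = fun t : ℝ =>
      ∑' n : ℕ, (t ^ (2 * n) / (Nat.factorial (2 * n) : ℝ)) • (C ∘L B) ^ n)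
    (hsh : sh = fun t : ℝ =>
      ∑' n : ℕ, (t ^ (2 * n + 1) / (Nat.factorial (2 * n + 1) : ℝ)) • (C ∘L B) ^ n)
    (hunit : ∀ t : ℝ, IsUnit (ch t))
    (Q : ℝ → (H →L[ℝ] H))
    (hQ : Q = fun t : ℝ => sh t ∘L Ring.inverse (ch t) ∘L B) :
    Q 0 = 0 ∧ ∀ t : ℝ, HasDerivAt Q (B - Q t ∘L C ∘L Q t) t := by
  have h1 : ‖(1 : H →L[ℝ] H)‖ ≤ 1 := ContinuousLinearMap.norm_id_le
  obtain rfl : ch = hyperbolicSeries (C ∘L B) 0 := hch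
  obtain rfl : sh = hyperbolicSeries (C ∘L B) 1 := hsh
  subst hQ
  refine ⟨by simp [hyperbolicSeries], fun t => ?_⟩
  have h := hasDerivAt_riccati (hasDerivAt_hyperbolicSeries_succ h1 _ 0 t)
    (hasDerivAt_hyperbolicSeries_zero h1 _ t) (hunit t) hBC (commute_hyperbolicSeries _ 1 t)
  simpa only [ContinuousLinearMap.mul_def, ContinuousLinearMap.comp_assoc] using h

/-- **Q-component of Theorem 4 of the paper (operator Riccati equation, D = 0).**
On a real separable Hilbert space, for commuting bounded operators `B`, `C`, with
`ch(t) = ∑ t^{2n}(CB)ⁿ/(2n)!` and `sh(t) = ∑ t^{2n+1}(CB)ⁿ/(2n+1)!`, if `ch(t)` is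
invertible for every `t`, then `Q(t) = sh(t) ∘ ch(t)⁻¹ ∘ B` satisfies `Q(0) = 0` and
`Q'(t) = B − Q(t) ∘ C ∘ Q(t)`. -/
theorem riccati_solution_Q_component
    {H : Type*} [NormedAddCommGroup H] [InnerProductSpace ℝ H] [CompleteSpace H]
    [TopologicalSpace.SeparableSpace H]
    (B C : H →L[ℝ] H) (hBC : B ∘L C = C ∘L B)
    (ch sh : ℝ → (H →L[ℝ] H))
    (hch : ch = fun t : ℝ =>
      ∑' n : ℕ, (t ^ (2 * n) / (Nat.factorial (2 * n) : ℝ)) • (C ∘L B) ^ n)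
    (hsh : sh = fun t : ℝ =>
      ∑' n : ℕ, (t ^ (2 * n + 1) / (Nat.factorial (2 * n + 1) : ℝ)) • (C ∘L B) ^ n)
    (hunit : ∀ t : ℝ, IsUnit (ch t))
    (Q : ℝ → (H →L[ℝ] H))
    (hQ : Q = fun t : ℝ => sh t ∘L Ring.inverse (ch t) ∘L B) :
    Q 0 = 0 ∧ ∀ t : ℝ, HasDerivAt Q (B - Q t ∘L C ∘L Q t) t :=
  riccati_solution_Q_component_general B C hBC ch sh hch hsh hunit Q hQ
end

section
/- Let H be a real separable Hilbert space and let B, C be bounded linear operators on H with B∘C = C∘B. For t ∈ ℝ set ch(t) = ∑_{n=0}^∞ t^{2n}(C∘B)ⁿ/(2n)! and sh(t) = ∑_{n=0}^∞ t^{2n+1}(C∘B)ⁿ/(2n+1)!, assume ch(t) is invertible for every t, and define Q(t) = sh(t) ∘ ch(t)⁻¹ ∘ B and R(t) = ch(t)⁻¹. Then R(0) = I and t ↦ R(t) is differentiable with R'(t) = − Q(t) ∘ C ∘ R(t) for all t. -/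
/-!
Reading `ch` as the exponential-type series `∑ (t^k/k!) • c_k` with `c_{2n} = (CB)ⁿ` and
`c_{2n+1} = 0`, termwise differentiation shifts the coefficients to `c_{k+1}`, which gives
`ch' = sh · CB`. The derivative of the ring inverse then gives `R' = -R · sh · CB · R`, and since
`ch` and `sh` are both series in `CB` they commute, so `R' = -sh · R · BC · R = -Q · C · R`.
-/

open scoped Nat

theorem hasDerivAt_pow_succ_div_factorial (k : ℕ) (s : ℝ) :
    HasDerivAt (fun x : ℝ => x ^ (k + 1) / (k + 1)!) (s ^ k / k !) s := by
  refine ((hasDerivAt_pow (k + 1) s).div_const ((k + 1)! : ℝ)).congr_deriv ?_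
  rw [Nat.factorial_succ]
  push_cast
  exact mul_div_mul_left _ _ (by positivity)

section ExponentialTypeSeries

variable {E : Type*} [NormedAddCommGroup E] [NormedSpace ℝ E] [CompleteSpace E]
  {a : ℕ → E} {M K : ℝ}

theorem summable_pow_div_factorial_smul (ha : ∀ k, ‖a k‖ ≤ M * K ^ k) (t : ℝ) :
    Summable fun k => (t ^ k / k ! : ℝ) • a k := by
  refine .of_norm_bounded ((Real.summable_pow_div_factorial (|t| * K)).mul_left M) fun k => ?_
  rw [norm_smul, norm_div, norm_pow, Real.norm_eq_abs, RCLike.norm_natCast]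
  calc |t| ^ k / k ! * ‖a k‖ ≤ |t| ^ k / k ! * (M * K ^ k) := by gcongr; exact ha k
    _ = M * ((|t| * K) ^ k / k !) := by ring

theorem hasDerivAt_tsum_pow_div_factorial_smul (ha : ∀ k, ‖a k‖ ≤ M * K ^ k) (t : ℝ) :
    HasDerivAt (fun s => ∑' k, (s ^ k / k ! : ℝ) • a k)
      (∑' k, (t ^ k / k ! : ℝ) • a (k + 1)) t := by
  have hshift : (fun s => ∑' k, (s ^ k / k ! : ℝ) • a k)
      = fun s => a 0 + ∑' k, (s ^ (k + 1) / (k + 1)! : ℝ) • a (k + 1) := by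
    funext s
    rw [(summable_pow_div_factorial_smul ha s).tsum_eq_zero_add]
    simp
  obtain ⟨r, hr, ht⟩ : ∃ r : ℝ, 0 ≤ r ∧ t ∈ Metric.ball 0 r :=
    ⟨|t| + 1, by positivity, by simp⟩
  have hbound : ∀ k, ∀ s ∈ Metric.ball (0 : ℝ) r,
      ‖(s ^ k / k ! : ℝ) • a (k + 1)‖ ≤ M * K * ((r * K) ^ k / k !) := by
    intro k s hs
    rw [mem_ball_zero_iff, Real.norm_eq_abs] at hs
    rw [norm_smul, norm_div, norm_pow, Real.norm_eq_abs, RCLike.norm_natCast]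
    calc |s| ^ k / k ! * ‖a (k + 1)‖ ≤ r ^ k / k ! * (M * K ^ (k + 1)) := by
          gcongr
          exact ha _
      _ = M * K * ((r * K) ^ k / k !) := by ring
  rw [hshift]
  refine HasDerivAt.const_add _ (hasDerivAt_tsum_of_isPreconnected
    ((Real.summable_pow_div_factorial (r * K)).mul_left (M * K)) Metric.isOpen_ball
    (convex_ball 0 r).isPreconnected
    (fun k s _ => (hasDerivAt_pow_succ_div_factorial k s).smul_const (a (k + 1)))
    hbound ht ?_ ht)
  exact (summable_nat_add_iff 1).mpr (summable_pow_div_factorial_smul ha t)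

end ExponentialTypeSeries

theorem Commute.ringInverse_left {M₀ : Type*} [MonoidWithZero M₀] {a b : M₀}
    (h : Commute a b) : Commute (Ring.inverse a) b := by
  by_cases ha : IsUnit a
  · obtain ⟨u, rfl⟩ := ha
    rw [Ring.inverse_unit]
    exact h.units_inv_left
  · rw [Ring.inverse_non_unit a ha]
    exact Commute.zero_left b

theorem HasDerivAt.ringInverse_s6 {𝕜 R : Type*} [NontriviallyNormedField 𝕜] [NormedRing R]
    [HasSummableGeomSeries R] [NormedAlgebra 𝕜 R] {f : 𝕜 → R} {f' : R} {t : 𝕜}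
    (hf : HasDerivAt f f' t) (hunit : IsUnit (f t)) :
    HasDerivAt (fun s => Ring.inverse (f s))
      (-(Ring.inverse (f t) * f' * Ring.inverse (f t))) t := by
  obtain ⟨u, hu⟩ := hunit
  have hinv : HasFDerivAt Ring.inverse
      (-ContinuousLinearMap.mulLeftRight 𝕜 R ↑u⁻¹ ↑u⁻¹) (f t) :=
    hu ▸ hasFDerivAt_ringInverse u
  rw [← hu, Ring.inverse_unit]
  exact hinv.comp_hasDerivAt t hf

section CoshCoefficients

variable {𝔸 : Type*}

def chCoeff [MonoidWithZero 𝔸] (A : 𝔸) (k : ℕ) : 𝔸 := if Even k then A ^ (k / 2) else 0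

theorem chCoeff_two_mul [MonoidWithZero 𝔸] (A : 𝔸) (n : ℕ) : chCoeff A (2 * n) = A ^ n := by
  simp [chCoeff]

theorem chCoeff_two_mul_add_one [MonoidWithZero 𝔸] (A : 𝔸) (n : ℕ) :
    chCoeff A (2 * n + 1) = 0 := by
  simp [chCoeff]

variable [NormedRing 𝔸]

theorem norm_pow_le_max_one_mul (A : 𝔸) (n : ℕ) : ‖A ^ n‖ ≤ max 1 ‖(1 : 𝔸)‖ * ‖A‖ ^ n := by
  rcases n.eq_zero_or_pos with rfl | hn
  · simp
  · calc ‖A ^ n‖ ≤ ‖A‖ ^ n := norm_pow_le' A hn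
      _ ≤ max 1 ‖(1 : 𝔸)‖ * ‖A‖ ^ n := le_mul_of_one_le_left (by positivity) (le_max_left _ _)

theorem norm_pow_div_two_le (A : 𝔸) (k : ℕ) :
    ‖A ^ (k / 2)‖ ≤ max 1 ‖(1 : 𝔸)‖ * (1 + ‖A‖) ^ k :=
  calc ‖A ^ (k / 2)‖ ≤ max 1 ‖(1 : 𝔸)‖ * ‖A‖ ^ (k / 2) := norm_pow_le_max_one_mul A _
    _ ≤ max 1 ‖(1 : 𝔸)‖ * (1 + ‖A‖) ^ (k / 2) := by gcongr; linarith
    _ ≤ max 1 ‖(1 : 𝔸)‖ * (1 + ‖A‖) ^ k := by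
      gcongr
      · linarith [norm_nonneg A]
      · exact Nat.div_le_self k 2

theorem norm_chCoeff_le (A : 𝔸) (k : ℕ) :
    ‖chCoeff A k‖ ≤ max 1 ‖(1 : 𝔸)‖ * (1 + ‖A‖) ^ k := by
  unfold chCoeff
  split_ifs
  · exact norm_pow_div_two_le A k
  · rw [norm_zero]
    positivity

end CoshCoefficients

noncomputable section HyperbolicSeries

variable {𝔸 : Type*} [NormedRing 𝔸] [NormedAlgebra ℝ 𝔸]

def chSeries (A : 𝔸) (t : ℝ) : 𝔸 := ∑' n : ℕ, (t ^ (2 * n) / (2 * n)! : ℝ) • A ^ n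

def shSeries (A : 𝔸) (t : ℝ) : 𝔸 := ∑' n : ℕ, (t ^ (2 * n + 1) / (2 * n + 1)! : ℝ) • A ^ n

theorem chSeries_zero (A : 𝔸) : chSeries A 0 = 1 := by
  rw [chSeries, tsum_eq_single 0 fun n hn => by simp [hn]]
  simp

theorem commute_chSeries_shSeries (A : 𝔸) (s t : ℝ) :
    Commute (chSeries A s) (shSeries A t) :=
  .tsum_left _ fun m => .tsum_right _ fun n =>
    ((Commute.pow_pow_self A m n).smul_left _).smul_right _

theorem chSeries_eq_tsum_chCoeff (A : 𝔸) (t : ℝ) :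
    chSeries A t = ∑' k, (t ^ k / k ! : ℝ) • chCoeff A k := by
  rw [← (mul_right_injective₀ two_ne_zero).tsum_eq]
  · simp only [chSeries, chCoeff_two_mul]
  · intro k hk
    obtain ⟨m, rfl | rfl⟩ := Nat.even_or_odd' k
    · exact ⟨m, rfl⟩
    · simp [chCoeff_two_mul_add_one] at hk

variable [CompleteSpace 𝔸]

theorem summable_shSeries (A : 𝔸) (t : ℝ) :
    Summable fun n : ℕ => (t ^ (2 * n + 1) / (2 * n + 1)! : ℝ) • A ^ n := by
  have h := (summable_pow_div_factorial_smul (norm_pow_div_two_le A) t).comp_injective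
    (i := fun n => 2 * n + 1) (fun m n h => by simpa using h)
  simpa [Function.comp_def, Nat.mul_add_div] using h

theorem tsum_chCoeff_succ (A : 𝔸) (t : ℝ) :
    ∑' k, (t ^ k / k ! : ℝ) • chCoeff A (k + 1) = shSeries A t * A := by
  have hodd : Function.Injective fun n : ℕ => 2 * n + 1 := fun m n h => by simpa using h
  rw [shSeries, ← (summable_shSeries A t).tsum_mul_right, ← hodd.tsum_eq]
  · simp only [show ∀ n, 2 * n + 1 + 1 = 2 * (n + 1) by omega, chCoeff_two_mul, pow_succ,
      smul_mul_assoc]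
  · intro k hk
    obtain ⟨m, rfl | rfl⟩ := Nat.even_or_odd' k
    · simp [chCoeff_two_mul_add_one] at hk
    · exact ⟨m, rfl⟩

theorem hasDerivAt_chSeries (A : 𝔸) (t : ℝ) :
    HasDerivAt (chSeries A) (shSeries A t * A) t := by
  rw [← tsum_chCoeff_succ, funext (chSeries_eq_tsum_chCoeff A)]
  exact hasDerivAt_tsum_pow_div_factorial_smul (norm_chCoeff_le A) t

end HyperbolicSeries

theorem mehler_solution_R_component_general
    {H : Type*} [NormedAddCommGroup H] [InnerProductSpace ℝ H] [CompleteSpace H]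
    (B C : H →L[ℝ] H) (hBC : B ∘L C = C ∘L B)
    (ch sh : ℝ → (H →L[ℝ] H))
    (hch : ch = fun t : ℝ =>
      ∑' n : ℕ, (t ^ (2 * n) / (Nat.factorial (2 * n) : ℝ)) • (C ∘L B) ^ n)
    (hsh : sh = fun t : ℝ =>
      ∑' n : ℕ, (t ^ (2 * n + 1) / (Nat.factorial (2 * n + 1) : ℝ)) • (C ∘L B) ^ n)
    (hunit : ∀ t : ℝ, IsUnit (ch t))
    (Q R : ℝ → (H →L[ℝ] H))
    (hQ : Q = fun t : ℝ => sh t ∘L Ring.inverse (ch t) ∘L B)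
    (hR : R = fun t : ℝ => Ring.inverse (ch t)) :
    R 0 = 1 ∧ ∀ t : ℝ, HasDerivAt R (-(Q t ∘L C ∘L R t)) t := by
  replace hch : ch = chSeries (C * B) := hch
  replace hsh : sh = shSeries (C * B) := hsh
  replace hBC : B * C = C * B := hBC
  subst hch hsh hQ hR
  refine ⟨by simp [chSeries_zero], fun t => ?_⟩
  have hcomm : Commute (Ring.inverse (chSeries (C * B) t)) (shSeries (C * B) t) :=
    (commute_chSeries_shSeries _ t t).ringInverse_left
  refine ((hasDerivAt_chSeries (C * B) t).ringInverse_s6 (hunit t)).congr_deriv ?_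
  simp only [← ContinuousLinearMap.mul_def]
  rw [← mul_assoc _ (shSeries _ t), hcomm.eq, ← hBC]
  simp only [mul_assoc]

/-- **R-component of Theorem 4 of the paper (D = 0).**
On a real separable Hilbert space, for commuting bounded operators `B`, `C`, with
`ch(t) = ∑ t^{2n}(CB)ⁿ/(2n)!` and `sh(t) = ∑ t^{2n+1}(CB)ⁿ/(2n+1)!` and `ch(t)`
invertible for all `t`, the functions `Q(t) = sh(t) ∘ ch(t)⁻¹ ∘ B` and `R(t) = ch(t)⁻¹`
satisfy `R(0) = I` and `R'(t) = −Q(t) ∘ C ∘ R(t)`. -/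
theorem mehler_solution_R_component
    {H : Type*} [NormedAddCommGroup H] [InnerProductSpace ℝ H] [CompleteSpace H]
    [TopologicalSpace.SeparableSpace H]
    (B C : H →L[ℝ] H) (hBC : B ∘L C = C ∘L B)
    (ch sh : ℝ → (H →L[ℝ] H))
    (hch : ch = fun t : ℝ =>
      ∑' n : ℕ, (t ^ (2 * n) / (Nat.factorial (2 * n) : ℝ)) • (C ∘L B) ^ n)
    (hsh : sh = fun t : ℝ =>
      ∑' n : ℕ, (t ^ (2 * n + 1) / (Nat.factorial (2 * n + 1) : ℝ)) • (C ∘L B) ^ n)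
    (hunit : ∀ t : ℝ, IsUnit (ch t))
    (Q R : ℝ → (H →L[ℝ] H))
    (hQ : Q = fun t : ℝ => sh t ∘L Ring.inverse (ch t) ∘L B)
    (hR : R = fun t : ℝ => Ring.inverse (ch t)) :
    R 0 = 1 ∧ ∀ t : ℝ, HasDerivAt R (-(Q t ∘L C ∘L R t)) t :=
  mehler_solution_R_component_general B C hBC ch sh hch hsh hunit Q R hQ hR
end

section
/- Let B and C be commuting symmetric positive-semidefinite n×n real matrices and α ∈ ℝ. For t ∈ ℝ set ch(t) = ∑_{m=0}^∞ t^{2m}(CB)ᵐ/(2m)! and sh(t) = ∑_{m=0}^∞ t^{2m+1}(CB)ᵐ/(2m+1)!, and assume ch(t) is positive definite for every t; define Q(t) = sh(t)·ch(t)⁻¹·B and s(t) = e^{αt}·(det ch(t))^{−1/2}. Then s(0) = 1 and t ↦ s(t) is differentiable with s'(t) = −½ tr(C·Q(t))·s(t) + α·s(t) for all t. -/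
/-!
For `A = C * B` put `J = blockSqrt A = fromBlocks 0 A 1 0`. Then `J ^ 2 = fromBlocks A 0 0 A`,
so splitting the exponential series into even and odd powers gives
`exp (t • J) = fromBlocks (ch t) (A * sh t) (sh t) (ch t)`, and differentiating `exp (t • J)`
yields `ch' = A * sh` without ever taking a square root of `A`. Jacobi's formula
`(det ch)' = det ch * tr (ch⁻¹ * ch')` then gives
`(det ch ^ (-1/2))' = -½ tr (ch⁻¹ A sh) det ch ^ (-1/2)`, and `tr (C Q) = tr (ch⁻¹ C B sh)`
by cyclicity of the trace and `B * C = C * B`.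
-/

open Matrix NormedSpace

namespace Matrix

section Blocks

variable {ι R l n o p : Type*} [AddCommMonoid R] [TopologicalSpace R]
  {f : ι → Matrix (n ⊕ o) (l ⊕ p) R} {a : Matrix (n ⊕ o) (l ⊕ p) R}

theorem _root_.HasSum.matrix_toBlocks₁₁ (hf : HasSum f a) :
    HasSum (fun i => (f i).toBlocks₁₁) a.toBlocks₁₁ :=
  Pi.hasSum.2 fun i => Pi.hasSum.2 fun j => Pi.hasSum.1 (Pi.hasSum.1 hf (.inl i)) (.inl j)

theorem _root_.HasSum.matrix_toBlocks₂₁ (hf : HasSum f a) :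
    HasSum (fun i => (f i).toBlocks₂₁) a.toBlocks₂₁ :=
  Pi.hasSum.2 fun i => Pi.hasSum.2 fun j => Pi.hasSum.1 (Pi.hasSum.1 hf (.inr i)) (.inl j)

end Blocks

section BlockSqrt

variable {m R : Type*} [DecidableEq m]

def blockSqrt [Zero R] [One R] (A : Matrix m m R) : Matrix (m ⊕ m) (m ⊕ m) R :=
  fromBlocks 0 A 1 0

variable [Fintype m] [Semiring R] (A : Matrix m m R)

theorem blockSqrt_pow_two_mul (k : ℕ) :
    blockSqrt A ^ (2 * k) = fromBlocks (A ^ k) 0 0 (A ^ k) := by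
  induction k with
  | zero => simp [fromBlocks_one]
  | succ k ih =>
    rw [mul_add, mul_one, pow_add, ih, pow_two, blockSqrt]
    simp [fromBlocks_multiply, pow_succ]

theorem blockSqrt_pow_two_mul_add_one (k : ℕ) :
    blockSqrt A ^ (2 * k + 1) = fromBlocks 0 (A ^ (k + 1)) (A ^ k) 0 := by
  rw [pow_succ, blockSqrt_pow_two_mul, blockSqrt]
  simp [fromBlocks_multiply, pow_succ]

end BlockSqrt

variable {m : Type*} [Fintype m] [DecidableEq m]

theorem hasSum_exp_smul (X : Matrix m m ℝ) (t : ℝ) :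
    HasSum (fun k : ℕ => (t ^ k / k.factorial : ℝ) • X ^ k) (exp (t • X)) := by
  -- an auxiliary submultiplicative norm; it induces the product topology, so it is invisible here
  let _ : NormedRing (Matrix m m ℝ) := Matrix.linftyOpNormedRing
  let _ : NormedAlgebra ℝ (Matrix m m ℝ) := Matrix.linftyOpNormedAlgebra
  have h := exp_series_hasSum_exp' (𝕂 := ℝ) (t • X)
  simp only [smul_pow, smul_smul, ← div_eq_inv_mul] at h
  exact h

theorem hasDerivAt_exp_smul_apply (X : Matrix m m ℝ) (t : ℝ) (i j : m) :
    HasDerivAt (fun y : ℝ => exp (y • X) i j) ((X * exp (t • X)) i j) t := by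
  let _ : NormedRing (Matrix m m ℝ) := Matrix.linftyOpNormedRing
  let _ : NormedAlgebra ℝ (Matrix m m ℝ) := Matrix.linftyOpNormedAlgebra
  let entry : Matrix m m ℝ →L[ℝ] ℝ :=
    (ContinuousLinearMap.proj j).comp
      (ContinuousLinearMap.proj (R := ℝ) (φ := fun _ : m => m → ℝ) i)
  exact entry.hasFDerivAt.comp_hasDerivAt t (hasDerivAt_exp_smul_const' X t)

theorem hasSum_toBlocks₁₁_exp_smul_blockSqrt (A : Matrix m m ℝ) (t : ℝ) :
    HasSum (fun k : ℕ => (t ^ (2 * k) / (2 * k).factorial : ℝ) • A ^ k)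
      (exp (t • blockSqrt A)).toBlocks₁₁ := by
  have h := (hasSum_exp_smul (blockSqrt A) t).matrix_toBlocks₁₁
  rw [← (mul_right_injective₀ two_ne_zero).hasSum_iff] at h
  · simpa [Function.comp_def, blockSqrt_pow_two_mul, fromBlocks_smul] using h
  · intro k hk
    obtain ⟨l, rfl | rfl⟩ := Nat.even_or_odd' k
    · exact absurd ⟨l, rfl⟩ hk
    · simp [blockSqrt_pow_two_mul_add_one, fromBlocks_smul]

theorem hasSum_toBlocks₂₁_exp_smul_blockSqrt (A : Matrix m m ℝ) (t : ℝ) :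
    HasSum (fun k : ℕ => (t ^ (2 * k + 1) / (2 * k + 1).factorial : ℝ) • A ^ k)
      (exp (t • blockSqrt A)).toBlocks₂₁ := by
  have h := (hasSum_exp_smul (blockSqrt A) t).matrix_toBlocks₂₁
  rw [← (add_left_injective 1 |>.comp (mul_right_injective₀ two_ne_zero)).hasSum_iff] at h
  · simpa [Function.comp_def, blockSqrt_pow_two_mul_add_one, fromBlocks_smul] using h
  · intro k hk
    obtain ⟨l, rfl | rfl⟩ := Nat.even_or_odd' k
    · simp [blockSqrt_pow_two_mul, fromBlocks_smul]
    · exact absurd ⟨l, rfl⟩ hk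

theorem hasDerivAt_cosh_series_apply (A : Matrix m m ℝ) (t : ℝ) (i j : m) :
    HasDerivAt
      (fun y : ℝ => (∑' k : ℕ, (y ^ (2 * k) / (2 * k).factorial : ℝ) • A ^ k) i j)
      ((A * ∑' k : ℕ, (t ^ (2 * k + 1) / (2 * k + 1).factorial : ℝ) • A ^ k) i j) t := by
  simp only [fun y => (hasSum_toBlocks₁₁_exp_smul_blockSqrt A y).tsum_eq,
    (hasSum_toBlocks₂₁_exp_smul_blockSqrt A t).tsum_eq]
  refine (hasDerivAt_exp_smul_apply (blockSqrt A) t (.inl i) (.inl j)).congr_deriv ?_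
  simp [blockSqrt, mul_apply, Fintype.sum_sum_type, toBlocks₂₁]

theorem sum_det_updateRow_eq_trace_adjugate_mul {R : Type*} [CommRing R] (M N : Matrix m m R) :
    ∑ i, (M.updateRow i (N i)).det = (adjugate M * N).trace := by
  simp only [← cramer_transpose_apply, cramer_eq_adjugate_mulVec, ← adjugate_transpose, trace,
    diag, mul_apply, mulVec, dotProduct, transpose_apply]
  rw [Finset.sum_comm]

theorem hasDerivAt_det {𝕜 : Type*} [NontriviallyNormedField 𝕜] {M : 𝕜 → Matrix m m 𝕜}
    {M' : Matrix m m 𝕜} {t : 𝕜} (hM : ∀ i j, HasDerivAt (fun y => M y i j) (M' i j) t) :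
    HasDerivAt (fun y => (M y).det) ((adjugate (M t) * M').trace) t := by
  let det : ContinuousMultilinearMap 𝕜 (fun _ : m => m → 𝕜) 𝕜 :=
    ⟨(detRowAlternating (n := m) (R := 𝕜)).toMultilinearMap, continuous_id.matrix_det⟩
  have hM' : HasDerivAt (M · : 𝕜 → m → m → 𝕜) M' t :=
    hasDerivAt_pi.2 fun i => hasDerivAt_pi.2 (hM i)
  refine ((det.hasFDerivAt (M t)).comp_hasDerivAt t hM').congr_deriv ?_
  rw [← sum_det_updateRow_eq_trace_adjugate_mul]
  exact det.linearDeriv_apply _ _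

theorem hasDerivAt_det_of_det_ne_zero {𝕜 : Type*} [NontriviallyNormedField 𝕜]
    {M : 𝕜 → Matrix m m 𝕜} {M' : Matrix m m 𝕜} {t : 𝕜}
    (hM : ∀ i j, HasDerivAt (fun y => M y i j) (M' i j) t) (hdet : (M t).det ≠ 0) :
    HasDerivAt (fun y => (M y).det) ((M t).det * ((M t)⁻¹ * M').trace) t := by
  refine (hasDerivAt_det hM).congr_deriv ?_
  rw [inv_def, Ring.inverse_eq_inv, smul_mul_assoc, trace_smul, smul_eq_mul,
    mul_inv_cancel_left₀ hdet]

end Matrix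

theorem hasDerivAt_exp_mul_rpow_neg_half {d : ℝ → ℝ} {τ α t : ℝ}
    (hd : HasDerivAt d (d t * τ) t) (hdt : d t ≠ 0) :
    HasDerivAt (fun y => Real.exp (α * y) * d y ^ (-(1:ℝ)/2))
      (-(1/2) * τ * (Real.exp (α * t) * d t ^ (-(1:ℝ)/2))
        + α * (Real.exp (α * t) * d t ^ (-(1:ℝ)/2))) t := by
  have hexp : HasDerivAt (fun y => Real.exp (α * y)) (Real.exp (α * t) * (α * 1)) t :=
    ((hasDerivAt_id t).const_mul α).exp
  refine (hexp.mul (hd.rpow_const (p := -(1:ℝ)/2) (Or.inl hdt))).congr_deriv ?_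
  rw [Real.rpow_sub_one hdt]
  field_simp
  ring

theorem mehler_solution_s_component_general
    {n : ℕ} (B C : Matrix (Fin n) (Fin n) ℝ)
    (hBC : B * C = C * B) (α : ℝ)
    (ch sh : ℝ → Matrix (Fin n) (Fin n) ℝ)
    (hch : ch = fun t : ℝ =>
      ∑' m : ℕ, (t ^ (2 * m) / (Nat.factorial (2 * m) : ℝ)) • (C * B) ^ m)
    (hsh : sh = fun t : ℝ =>
      ∑' m : ℕ, (t ^ (2 * m + 1) / (Nat.factorial (2 * m + 1) : ℝ)) • (C * B) ^ m)
    (hchpos : ∀ t : ℝ, (ch t).PosDef)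
    (Q : ℝ → Matrix (Fin n) (Fin n) ℝ)
    (hQ : Q = fun t : ℝ => sh t * (ch t)⁻¹ * B)
    (s : ℝ → ℝ)
    (hs : s = fun t : ℝ => Real.exp (α * t) * (ch t).det ^ (-(1:ℝ)/2)) :
    s 0 = 1 ∧
    ∀ t : ℝ, HasDerivAt s (-(1/2) * (C * Q t).trace * s t + α * s t) t := by
  subst hQ hs
  have hch0 : ch 0 = 1 := by
    simp [hch, (hasSum_toBlocks₁₁_exp_smul_blockSqrt (C * B) 0).tsum_eq, ← fromBlocks_one]
  refine ⟨by simp [hch0], fun t => ?_⟩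
  have hdet : (ch t).det ≠ 0 := (hchpos t).det_pos.ne'
  have hderiv : HasDerivAt (fun y => (ch y).det)
      ((ch t).det * ((ch t)⁻¹ * (C * B * sh t)).trace) t :=
    hasDerivAt_det_of_det_ne_zero
      (fun i j => hch ▸ hsh ▸ hasDerivAt_cosh_series_apply (C * B) t i j) hdet
  have htrace : (C * (sh t * (ch t)⁻¹ * B)).trace = ((ch t)⁻¹ * (C * B * sh t)).trace := by
    rw [← mul_assoc, trace_mul_comm, ← mul_assoc, ← mul_assoc, hBC, trace_mul_comm]
  simpa only [htrace] using hasDerivAt_exp_mul_rpow_neg_half (α := α) hderiv hdet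

/-- **s-component of Theorem 4 of the paper (finite dimension, D = 0).**
For commuting symmetric positive-semidefinite `n×n` real matrices `B`, `C` and `α : ℝ`,
with `ch(t) = ∑ t^{2m}(CB)ᵐ/(2m)!`, `sh(t) = ∑ t^{2m+1}(CB)ᵐ/(2m+1)!`, `ch(t)` positive
definite for all `t`, `Q(t) = sh(t)·ch(t)⁻¹·B` and `s(t) = e^{αt}(det ch(t))^{−1/2}`,
one has `s(0) = 1` and `s'(t) = −½ tr(C·Q(t))·s(t) + α·s(t)`. -/
theorem mehler_solution_s_component
    {n : ℕ} (B C : Matrix (Fin n) (Fin n) ℝ)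
    (hB : B.PosSemidef) (hC : C.PosSemidef) (hBC : B * C = C * B) (α : ℝ)
    (ch sh : ℝ → Matrix (Fin n) (Fin n) ℝ)
    (hch : ch = fun t : ℝ =>
      ∑' m : ℕ, (t ^ (2 * m) / (Nat.factorial (2 * m) : ℝ)) • (C * B) ^ m)
    (hsh : sh = fun t : ℝ =>
      ∑' m : ℕ, (t ^ (2 * m + 1) / (Nat.factorial (2 * m + 1) : ℝ)) • (C * B) ^ m)
    (hchpos : ∀ t : ℝ, (ch t).PosDef)
    (Q : ℝ → Matrix (Fin n) (Fin n) ℝ)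
    (hQ : Q = fun t : ℝ => sh t * (ch t)⁻¹ * B)
    (s : ℝ → ℝ)
    (hs : s = fun t : ℝ => Real.exp (α * t) * (ch t).det ^ (-(1:ℝ)/2)) :
    s 0 = 1 ∧
    ∀ t : ℝ, HasDerivAt s (-(1/2) * (C * Q t).trace * s t + α * s t) t :=
  mehler_solution_s_component_general B C hBC α ch sh hch hsh hchpos Q hQ s hs
end

section
/- Let B and C be commuting symmetric positive-semidefinite n×n real matrices. For t ∈ ℝ set ch(t) = ∑_{m=0}^∞ t^{2m}(CB)ᵐ/(2m)! and sh(t) = ∑_{m=0}^∞ t^{2m+1}(CB)ᵐ/(2m+1)!. Then for every t ∈ ℝ the matrix ch(t) is symmetric positive definite and det ch(t) ≥ 1; moreover, if B is positive definite, then for every t > 0 the matrix Q(t) = sh(t)·ch(t)⁻¹·B is symmetric positive definite. -/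
/-!
Since `B` and `C` are commuting and positive semidefinite, so is `A = C * B`, and its spectrum
lies in `[0, ∞)`. Evaluating the series eigenvalue by eigenvalue identifies `ch t` and `sh t` with
the functional calculus of `A` applied to `x ↦ cosh (t √x) ≥ 1` and to
`x ↦ ∑ t^(2m+1) xᵐ / (2m+1)!`, which is positive for `t > 0`, `x ≥ 0`. So `ch t` is positive
definite with determinant `∏ cosh (t √λᵢ) ≥ 1`, and `sh t` is positive definite for `t > 0`.
Finally `sh t`, `(ch t)⁻¹` and `B` commute pairwise, and a product of commuting positive definite
matrices is positive definite.
-/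

open scoped MatrixOrder ComplexOrder Nat

namespace Real

theorem hasSum_cosh_mul_sqrt (t : ℝ) {x : ℝ} (hx : 0 ≤ x) :
    HasSum (fun m : ℕ => t ^ (2 * m) / (2 * m)! * x ^ m) (cosh (t * √x)) := by
  convert hasSum_cosh (t * √x) using 1
  ext m
  rw [mul_pow, pow_mul (√x), sq_sqrt hx]
  ring

theorem summable_pow_odd_div_factorial_mul_pow (t x : ℝ) :
    Summable fun m : ℕ => t ^ (2 * m + 1) / (2 * m + 1)! * x ^ m := by
  refine ((summable_pow_div_factorial (t ^ 2 * |x|)).mul_left |t|).of_norm_bounded fun m => ?_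
  calc ‖t ^ (2 * m + 1) / (2 * m + 1)! * x ^ m‖
      = |t| * ((t ^ 2 * |x|) ^ m / (2 * m + 1)!) := by
        simp only [norm_mul, norm_div, norm_pow, norm_eq_abs, Nat.abs_cast, pow_succ,
          (even_two_mul m).pow_abs]
        ring
    _ ≤ |t| * ((t ^ 2 * |x|) ^ m / m !) := by
        gcongr
        omega

theorem tsum_pow_odd_div_factorial_mul_pow_pos {t x : ℝ} (ht : 0 < t) (hx : 0 ≤ x) :
    0 < ∑' m : ℕ, t ^ (2 * m + 1) / (2 * m + 1)! * x ^ m :=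
  (summable_pow_odd_div_factorial_mul_pow t x).tsum_pos (fun m => by positivity) 0
    (by simpa using ht)

end Real

namespace Matrix

theorem Commute.inv_right {n R : Type*} [Fintype n] [DecidableEq n] [CommRing R]
    {A B : Matrix n n R} (h : Commute A B) : Commute A B⁻¹ := by
  simpa only [zpow_neg_one] using Commute.zpow_right h (-1)

variable {n 𝕜 : Type*} [Fintype n] [DecidableEq n] [RCLike 𝕜]

theorem PosSemidef.mul_of_commute {A B : Matrix n n 𝕜} (hA : A.PosSemidef) (hB : B.PosSemidef)
    (h : Commute A B) : (A * B).PosSemidef :=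
  nonneg_iff_posSemidef.mp (h.mul_nonneg hA.nonneg hB.nonneg)

theorem PosDef.mul_of_commute {A B : Matrix n n 𝕜} (hA : A.PosDef) (hB : B.PosDef)
    (h : Commute A B) : (A * B).PosDef :=
  (hA.posSemidef.mul_of_commute hB.posSemidef h).posDef_iff_isUnit.mpr (hA.isUnit.mul hB.isUnit)

namespace IsHermitian

variable {A : Matrix n n 𝕜}

-- The spectrum of a matrix is finite, so pointwise convergence on it is enough.
theorem hasSum_cfc (hA : A.IsHermitian) {c : ℕ → ℝ} {f : ℝ → ℝ}
    (h : ∀ x ∈ spectrum ℝ A, HasSum (fun m => c m * x ^ m) (f x)) :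
    HasSum (fun m => c m • A ^ m) (cfc f A) := by
  have hdiag : HasSum (fun m => diagonal (RCLike.ofReal ∘ (fun x => c m * x ^ m) ∘ hA.eigenvalues))
      (diagonal (RCLike.ofReal ∘ f ∘ hA.eigenvalues) : Matrix n n 𝕜) :=
    (Pi.hasSum.mpr fun i => (RCLike.hasSum_ofReal 𝕜).mpr
      (h _ (hA.eigenvalues_mem_spectrum_real i))).matrix_diagonal
  have hconj := hdiag.map (Unitary.conjStarAlgAut 𝕜 _ hA.eigenvectorUnitary)
    ((continuous_const.mul continuous_id).mul continuous_const)
  convert hconj using 1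
  · ext1 m
    rw [← cfc_pow_id (R := ℝ) A m, ← cfc_smul .., hA.cfc_eq]
    rfl
  · rw [hA.cfc_eq]
    rfl

theorem det_cfc (hA : A.IsHermitian) (f : ℝ → ℝ) :
    (cfc f A).det = ∏ i, (f (hA.eigenvalues i) : 𝕜) := by
  simp [hA.cfc_eq, IsHermitian.cfc, -Unitary.conjStarAlgAut_apply]

theorem posDef_cfc (hA : A.IsHermitian) {f : ℝ → ℝ} (hf : ∀ x ∈ spectrum ℝ A, 0 < f x) :
    (cfc f A).PosDef := by
  have hfin : (spectrum ℝ A).Finite := hA.spectrum_real_eq_range_eigenvalues ▸ Set.finite_range _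
  rwa [← isStrictlyPositive_iff_posDef, cfc_isStrictlyPositive_iff f A (hfin.continuousOn f)]

end IsHermitian

end Matrix

open Real in
/-- **Positivity of the Mehler coefficients (Theorem 4 and Remark 2 of the paper).**
For commuting symmetric positive-semidefinite `n×n` real matrices `B`, `C`, with
`ch(t) = ∑ t^{2m}(CB)ᵐ/(2m)!` and `sh(t) = ∑ t^{2m+1}(CB)ᵐ/(2m+1)!`, the matrix `ch(t)`
is symmetric positive definite with `det ch(t) ≥ 1` for every `t`; moreover, if `B` is
positive definite, then `Q(t) = sh(t)·ch(t)⁻¹·B` is symmetric positive definite for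
every `t > 0`. -/
theorem mehler_coefficients_positivity
    {n : ℕ} (B C : Matrix (Fin n) (Fin n) ℝ)
    (hB : B.PosSemidef) (hC : C.PosSemidef) (hBC : B * C = C * B)
    (ch sh : ℝ → Matrix (Fin n) (Fin n) ℝ)
    (hch : ch = fun t : ℝ =>
      ∑' m : ℕ, (t ^ (2 * m) / (Nat.factorial (2 * m) : ℝ)) • (C * B) ^ m)
    (hsh : sh = fun t : ℝ =>
      ∑' m : ℕ, (t ^ (2 * m + 1) / (Nat.factorial (2 * m + 1) : ℝ)) • (C * B) ^ m)
    (Q : ℝ → Matrix (Fin n) (Fin n) ℝ)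
    (hQ : Q = fun t : ℝ => sh t * (ch t)⁻¹ * B) :
    (∀ t : ℝ, (ch t).PosDef ∧ 1 ≤ (ch t).det) ∧
    (B.PosDef → ∀ t : ℝ, 0 < t → (Q t).PosDef) := by
  have hCB : (C * B).PosSemidef := hC.mul_of_commute hB hBC.symm
  have hspec : ∀ x ∈ spectrum ℝ (C * B), 0 ≤ x := fun x hx =>
    spectrum_nonneg_of_nonneg hCB.nonneg hx
  have hch_cfc (t : ℝ) : ch t = cfc (fun x => cosh (t * √x)) (C * B) :=
    hch ▸ (hCB.1.hasSum_cfc fun x hx => hasSum_cosh_mul_sqrt t (hspec x hx)).tsum_eq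
  have hsh_cfc (t : ℝ) :
      sh t = cfc (fun x => ∑' m : ℕ, t ^ (2 * m + 1) / (2 * m + 1)! * x ^ m) (C * B) :=
    hsh ▸ (hCB.1.hasSum_cfc fun x _ => (summable_pow_odd_div_factorial_mul_pow t x).hasSum).tsum_eq
  have hch_pd (t : ℝ) : (ch t).PosDef := hch_cfc t ▸ hCB.1.posDef_cfc fun x _ => cosh_pos _
  refine ⟨fun t => ⟨hch_pd t, ?_⟩, fun hBpd t ht => ?_⟩
  · rw [hch_cfc, hCB.1.det_cfc]
    exact Finset.one_le_prod fun i _ => one_le_cosh _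
  have hsh_pd : (sh t).PosDef := hsh_cfc t ▸ hCB.1.posDef_cfc fun x hx =>
    tsum_pow_odd_div_factorial_mul_pow_pos ht (hspec x hx)
  have hsh_ch : Commute (sh t) (ch t) := hsh_cfc t ▸ hch_cfc t ▸ cfc_commute_cfc _ _ _
  have hB_CB : Commute B (C * B) := Commute.mul_right hBC (Commute.refl B)
  have hB_ch : Commute B (ch t) :=
    hch ▸ Commute.tsum_right B fun m => (hB_CB.pow_right m).smul_right _
  have hB_sh : Commute B (sh t) :=
    hsh ▸ Commute.tsum_right B fun m => (hB_CB.pow_right m).smul_right _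
  rw [hQ]
  exact (hsh_pd.mul_of_commute (hch_pd t).inv (Matrix.Commute.inv_right hsh_ch)).mul_of_commute
    hBpd (hB_sh.mul_right (Matrix.Commute.inv_right hB_ch)).symm
end

section
/- Let B be a symmetric positive-definite n×n real matrix, D an arbitrary n×n real matrix, α ∈ ℝ and x ∈ ℝⁿ. For t > 0 set Q(t) = ∫₀ᵗ e^{rDᵀ}·B·e^{rD} dr (which is symmetric positive definite for t > 0) and R(t) = e^{tDᵀ}, and define u(t,y) = e^{αt}·(2π)^{−n/2}·(det Q(t))^{−1/2}·exp(−½⟨Q(t)⁻¹(y − R(t)x), y − R(t)x⟩) for y ∈ ℝⁿ. Then for every t > 0 and y ∈ ℝⁿ, ∂u/∂t (t,y) = ½·tr(B·Hess_y u(t,y)) − (⟨∇_y u(t,y), Dᵀ y⟩ + tr(D)·u(t,y)) + α·u(t,y), where ∇_y u and Hess_y u denote the gradient and Hessian of u in y. -/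
open Matrix

/-!
The covariance `Q(t) = ∫₀ᵗ e^{rDᵀ} B e^{rD} dr` solves the Lyapunov equation
`Q' = B + DᵀQ + QD` (differentiate `e^{tDᵀ} B e^{tD}` and integrate), and the mean
`m(t) = e^{tDᵀ}x` solves `m' = Dᵀm`. Differentiating the density of `N(m(t), Q(t))` in time
(Jacobi's formula for `det Q`, `(Q⁻¹)' = -Q⁻¹Q'Q⁻¹`) and substituting these two equations gives,
with `w = Q⁻¹(y - m)`, the factor `−½ tr(BQ⁻¹) − tr D + ½⟨w, Bw⟩ + ⟨w, Dᵀy⟩`.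
In space the gradient of the density is `−w` times the density and its Hessian `wwᵀ − Q⁻¹`
times the density, so `½ tr(B · Hess) − ⟨∇, Dᵀy⟩` produces the same factor without `− tr D`;
that term comes from the zeroth-order term of the equation, and `αu` from the factor `e^{αt}`.
-/

-- `NormedSpace.exp` and `Ring.inverse` calculus needs a normed-ring structure on matrices. Any
-- matrix norm induces the product topology, which is all that `HasDerivAt` depends on.
section NormedRing
attribute [local instance] Matrix.linftyOpNormedRing Matrix.linftyOpNormedAlgebra

variable {𝕂 ι : Type*} [RCLike 𝕂] [Fintype ι] [DecidableEq ι] {t : 𝕂}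

theorem Matrix.hasDerivAt_exp_smul_const (M : Matrix ι ι 𝕂) (t : 𝕂) :
    HasDerivAt (fun τ : 𝕂 => NormedSpace.exp (τ • M)) (NormedSpace.exp (t • M) * M) t :=
  _root_.hasDerivAt_exp_smul_const M t

theorem Matrix.hasDerivAt_exp_smul_const' (M : Matrix ι ι 𝕂) (t : 𝕂) :
    HasDerivAt (fun τ : 𝕂 => NormedSpace.exp (τ • M)) (M * NormedSpace.exp (t • M)) t :=
  _root_.hasDerivAt_exp_smul_const' M t

theorem HasDerivAt.matrix_inv {M : 𝕂 → Matrix ι ι 𝕂} {M' : Matrix ι ι 𝕂}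
    (h : HasDerivAt M M' t) (hM : IsUnit (M t).det) :
    HasDerivAt (fun τ => (M τ)⁻¹) (-((M t)⁻¹ * M' * (M t)⁻¹)) t := by
  have hunit : IsUnit (M t) := (isUnit_iff_isUnit_det _).2 hM
  have key := (hasFDerivAt_ringInverse (𝕜 := 𝕂) hunit.unit).comp_hasDerivAt t h
  rw [_root_.neg_apply, ContinuousLinearMap.mulLeftRight_apply, coe_units_inv,
    hunit.unit_spec] at key
  rwa [show Ring.inverse ∘ M = fun τ => (M τ)⁻¹ from
    funext fun τ => (nonsing_inv_eq_ringInverse (M τ)).symm] at key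

end NormedRing

attribute [local instance] Matrix.normedAddCommGroup Matrix.normedSpace

section MatrixCalculus
variable {𝕜 ι : Type*} [NontriviallyNormedField 𝕜] [Fintype ι] {t : 𝕜}

theorem HasDerivAt.matrix_mul [CompleteSpace 𝕜] {A B : 𝕜 → Matrix ι ι 𝕜} {A' B' : Matrix ι ι 𝕜}
    (hA : HasDerivAt A A' t) (hB : HasDerivAt B B' t) :
    HasDerivAt (fun τ => A τ * B τ) (A' * B t + A t * B') t := by
  rw [add_comm]
  exact (LinearMap.mul 𝕜 (Matrix ι ι 𝕜)).toContinuousBilinearMap.hasDerivAt_of_bilinear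
    (fun _ => hA) (fun _ => hB)

theorem HasDerivAt.matrix_mulVec [CompleteSpace 𝕜] {A : 𝕜 → Matrix ι ι 𝕜} {v : 𝕜 → ι → 𝕜}
    {A' : Matrix ι ι 𝕜} {v' : ι → 𝕜} (hA : HasDerivAt A A' t) (hv : HasDerivAt v v' t) :
    HasDerivAt (fun τ => A τ *ᵥ v τ) (A' *ᵥ v t + A t *ᵥ v') t := by
  rw [add_comm]
  exact (mulVecBilin 𝕜 𝕜 : Matrix ι ι 𝕜 →ₗ[𝕜] _).toContinuousBilinearMap.hasDerivAt_of_bilinear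
    (fun _ => hA) (fun _ => hv)

theorem HasDerivAt.dotProduct [CompleteSpace 𝕜] {v w : 𝕜 → ι → 𝕜} {v' w' : ι → 𝕜}
    (hv : HasDerivAt v v' t) (hw : HasDerivAt w w' t) :
    HasDerivAt (fun τ => v τ ⬝ᵥ w τ) (v' ⬝ᵥ w t + v t ⬝ᵥ w') t := by
  rw [add_comm]
  exact (dotProductBilin 𝕜 𝕜 : (ι → 𝕜) →ₗ[𝕜] _).toContinuousBilinearMap.hasDerivAt_of_bilinear
    (fun _ => hv) (fun _ => hw)

/-- Jacobi's formula. The determinant is multilinear in the rows, so its derivative is the sum of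
the determinants with one row replaced, which Cramer's rule turns into the adjugate. -/
theorem HasDerivAt.matrix_det [DecidableEq ι] {M : 𝕜 → Matrix ι ι 𝕜} {M' : Matrix ι ι 𝕜}
    (h : HasDerivAt M M' t) :
    HasDerivAt (fun τ => (M τ).det) ((M t).adjugate * M').trace t := by
  let detL : ContinuousMultilinearMap 𝕜 (fun _ : ι => ι → 𝕜) 𝕜 :=
    ⟨(detRowAlternating : (ι → 𝕜) [⋀^ι]→ₗ[𝕜] 𝕜).toMultilinearMap, continuous_id.matrix_det⟩
  refine ((detL.hasFDerivAt (M t)).comp_hasDerivAt t h).congr_deriv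
    ((detL.linearDeriv_apply (M t) M').trans ?_)
  change ∑ i, ((M t).updateRow i (M' i)).det = _
  simp_rw [← cramer_transpose_apply, cramer_eq_adjugate_mulVec, ← adjugate_transpose]
  simp only [trace, diag, mul_apply, mulVec, transpose_apply]
  exact Finset.sum_comm

theorem hasFDerivAt_mulVec_sub [CompleteSpace 𝕜] (S : Matrix ι ι 𝕜) (m z : ι → 𝕜) :
    HasFDerivAt (fun z => S *ᵥ (z - m)) (mulVecLin S).toContinuousLinearMap z :=
  (mulVecLin S).toContinuousLinearMap.hasFDerivAt.comp z ((hasFDerivAt_id z).sub_const m)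

theorem hasFDerivAt_quadForm [CompleteSpace 𝕜] (S : Matrix ι ι 𝕜) (m z : ι → 𝕜) :
    HasFDerivAt (fun z => S *ᵥ (z - m) ⬝ᵥ (z - m))
      ((dotProductBilin 𝕜 𝕜).toContinuousBilinearMap ((S + Sᵀ) *ᵥ (z - m))) z := by
  refine ((dotProductBilin 𝕜 𝕜).toContinuousBilinearMap.hasFDerivAt_of_bilinear
    (hasFDerivAt_mulVec_sub S m z) ((hasFDerivAt_id z).sub_const m)).congr_fderiv ?_
  ext w
  simp [add_mulVec, dotProduct_comm, dotProduct_mulVec, mulVec_transpose, sub_vecMul,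
    dotProduct_sub]

end MatrixCalculus

section Lyapunov
variable {ι : Type*} [Fintype ι] [DecidableEq ι] (A B C : Matrix ι ι ℝ)

theorem hasDerivAt_exp_mul_mul_exp (r : ℝ) :
    HasDerivAt (fun s : ℝ => NormedSpace.exp (s • A) * B * NormedSpace.exp (s • C))
      (A * (NormedSpace.exp (r • A) * B * NormedSpace.exp (r • C))
        + NormedSpace.exp (r • A) * B * NormedSpace.exp (r • C) * C) r := by
  have h := ((hasDerivAt_exp_smul_const' A r).matrix_mul (hasDerivAt_const r B)).matrix_mul
    (hasDerivAt_exp_smul_const C r)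
  simpa only [mul_zero, add_zero, Matrix.mul_assoc] using h

theorem continuous_exp_mul_mul_exp :
    Continuous (fun s : ℝ => NormedSpace.exp (s • A) * B * NormedSpace.exp (s • C)) :=
  continuous_iff_continuousAt.2 fun r => (hasDerivAt_exp_mul_mul_exp A B C r).continuousAt

theorem exp_mul_mul_exp_eq_add_integral (t : ℝ) :
    NormedSpace.exp (t • A) * B * NormedSpace.exp (t • C)
      = B + A * (∫ r in (0:ℝ)..t, NormedSpace.exp (r • A) * B * NormedSpace.exp (r • C))
          + (∫ r in (0:ℝ)..t, NormedSpace.exp (r • A) * B * NormedSpace.exp (r • C)) * C := by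
  set P := fun s : ℝ => NormedSpace.exp (s • A) * B * NormedSpace.exp (s • C)
  have hPc := continuous_exp_mul_mul_exp A B C
  have hP := hPc.intervalIntegrable (μ := MeasureTheory.volume) 0 t
  have hA : ∫ r in (0:ℝ)..t, A * P r = A * ∫ r in (0:ℝ)..t, P r :=
    (LinearMap.mulLeft ℝ A).toContinuousLinearMap.intervalIntegral_comp_comm hP
  have hC : ∫ r in (0:ℝ)..t, P r * C = (∫ r in (0:ℝ)..t, P r) * C :=
    (LinearMap.mulRight ℝ C).toContinuousLinearMap.intervalIntegral_comp_comm hP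
  have hftc : ∫ r in (0:ℝ)..t, (A * P r + P r * C) = P t - P 0 :=
    intervalIntegral.integral_eq_sub_of_hasDerivAt (fun r _ => hasDerivAt_exp_mul_mul_exp A B C r)
      (((continuous_const.mul hPc).add (hPc.mul continuous_const)).intervalIntegrable _ _)
  rw [intervalIntegral.integral_add (f := fun r => A * P r) (g := fun r => P r * C)
    ((continuous_const.mul hPc).intervalIntegrable _ _)
    ((hPc.mul continuous_const).intervalIntegrable _ _), hA, hC] at hftc
  have hP0 : P 0 = B := by simp [P]
  rw [add_assoc, hftc, hP0, add_sub_cancel]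

theorem hasDerivAt_integral_exp_mul_mul_exp (t : ℝ) :
    HasDerivAt (fun τ => ∫ r in (0:ℝ)..τ, NormedSpace.exp (r • A) * B * NormedSpace.exp (r • C))
      (B + A * (∫ r in (0:ℝ)..t, NormedSpace.exp (r • A) * B * NormedSpace.exp (r • C))
        + (∫ r in (0:ℝ)..t, NormedSpace.exp (r • A) * B * NormedSpace.exp (r • C)) * C) t := by
  rw [← exp_mul_mul_exp_eq_add_integral]
  exact ((continuous_exp_mul_mul_exp A B C).integral_hasStrictDerivAt 0 t).hasDerivAt

end Lyapunov

section LyapunovAlgebra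
variable {R ι : Type*} [CommRing R] [Fintype ι] (B D : Matrix ι ι R) {Q : Matrix ι ι R}

theorem trace_inv_mul_lyapunov [DecidableEq ι] (hQ : IsUnit Q.det) :
    (Q⁻¹ * (B + Dᵀ * Q + Q * D)).trace = (B * Q⁻¹).trace + 2 * D.trace := by
  rw [Matrix.mul_add, Matrix.mul_add, trace_add, trace_add, trace_mul_comm Q⁻¹ B,
    trace_mul_comm Q⁻¹ (Dᵀ * Q), Matrix.mul_assoc, mul_nonsing_inv _ hQ, Matrix.mul_one,
    trace_transpose, ← Matrix.mul_assoc Q⁻¹ Q D, nonsing_inv_mul _ hQ, Matrix.one_mul]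
  ring

theorem dotProduct_lyapunov_mulVec (hQ : Q.IsSymm) {v w : ι → R} (hw : Q *ᵥ w = v) :
    w ⬝ᵥ (B + Dᵀ * Q + Q * D) *ᵥ w = w ⬝ᵥ B *ᵥ w + 2 * (w ⬝ᵥ Dᵀ *ᵥ v) := by
  have hDQ : w ⬝ᵥ (Q * D) *ᵥ w = w ⬝ᵥ Dᵀ *ᵥ v := by
    rw [← mulVec_mulVec, dotProduct_mulVec, ← mulVec_transpose, hQ.eq, hw, dotProduct_mulVec,
      ← mulVec_transpose, dotProduct_comm]
  rw [add_mulVec, add_mulVec, dotProduct_add, dotProduct_add, hDQ, ← mulVec_mulVec, hw]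
  ring

end LyapunovAlgebra

section Gaussian
variable {ι : Type*} [Fintype ι]

noncomputable def gaussianFun (c : ℝ) (S : Matrix ι ι ℝ) (m z : ι → ℝ) : ℝ :=
  c * Real.exp (-(1/2) * (S *ᵥ (z - m) ⬝ᵥ (z - m)))

variable {S : Matrix ι ι ℝ} {c : ℝ} {m : ι → ℝ}

theorem hasFDerivAt_gaussianFun (hS : S.IsSymm) (z : ι → ℝ) :
    HasFDerivAt (gaussianFun c S m)
      (-gaussianFun c S m z • (dotProductBilin ℝ ℝ).toContinuousBilinearMap (S *ᵥ (z - m))) z := by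
  refine ((((hasFDerivAt_quadForm S m z).const_mul (-(1/2))).exp).const_mul c).congr_fderiv ?_
  ext w
  simp only [gaussianFun, one_div, dotProduct_sub, neg_mul, hS.eq, add_mulVec, map_add, smul_add,
    neg_smul, smul_neg, _root_.add_apply, _root_.neg_apply, _root_.smul_apply,
    LinearMap.toContinuousBilinearMap_apply, dotProductBilin_apply_apply, smul_eq_mul]
  ring

theorem fderiv_gaussianFun_apply (hS : S.IsSymm) (z w : ι → ℝ) :
    fderiv ℝ (gaussianFun c S m) z w = -(S *ᵥ (z - m) ⬝ᵥ w) * gaussianFun c S m z := by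
  rw [(hasFDerivAt_gaussianFun hS z).fderiv]
  simp [mul_comm]

theorem fderiv_fderiv_gaussianFun_apply (hS : S.IsSymm) (y w w' : ι → ℝ) :
    fderiv ℝ (fun z => fderiv ℝ (gaussianFun c S m) z w) y w'
      = ((S *ᵥ (y - m) ⬝ᵥ w) * (S *ᵥ (y - m) ⬝ᵥ w') - S *ᵥ w' ⬝ᵥ w) * gaussianFun c S m y := by
  have hlin : HasFDerivAt (fun z => -(S *ᵥ (z - m) ⬝ᵥ w))
      (-(dotProductBilin ℝ ℝ).toContinuousBilinearMap.flip w ∘L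
        (mulVecLin S).toContinuousLinearMap) y :=
    (((dotProductBilin ℝ ℝ).toContinuousBilinearMap.flip w).hasFDerivAt.comp y
      (hasFDerivAt_mulVec_sub S m y)).neg
  simp_rw [fderiv_gaussianFun_apply hS]
  rw [(hlin.fun_mul (hasFDerivAt_gaussianFun hS y)).fderiv]
  simp only [neg_smul, smul_neg, _root_.add_apply, _root_.neg_apply, _root_.smul_apply,
    LinearMap.toContinuousBilinearMap_apply, dotProductBilin_apply_apply, smul_eq_mul, neg_mul,
    mul_neg, neg_neg, ContinuousLinearMap.comp_apply, LinearMap.coe_toContinuousLinearMap',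
    mulVecBilin_apply, ContinuousLinearMap.flip_apply]
  ring

variable [DecidableEq ι]

theorem gradient_gaussianFun (hS : S.IsSymm) (y : ι → ℝ) :
    (fun i => fderiv ℝ (gaussianFun c S m) y (Pi.single i 1))
      = -gaussianFun c S m y • (S *ᵥ (y - m)) := by
  ext i
  simp [fderiv_gaussianFun_apply hS, mul_comm]

theorem hessian_gaussianFun (hS : S.IsSymm) (y : ι → ℝ) :
    Matrix.of (fun i j => fderiv ℝ (fun z => fderiv ℝ (gaussianFun c S m) z (Pi.single j 1)) y
        (Pi.single i 1))
      = gaussianFun c S m y • (vecMulVec (S *ᵥ (y - m)) (S *ᵥ (y - m)) - S) := by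
  ext i j
  have hji : S j i = S i j := by rw [← transpose_apply S i j, hS.eq]
  simp only [fderiv_fderiv_gaussianFun_apply hS, dotProduct_single, mul_one, mulVec_single,
    MulOpposite.op_one, one_smul, col_apply, of_apply, hji, Matrix.smul_apply, Matrix.sub_apply,
    vecMulVec_apply, smul_eq_mul]
  ring

theorem half_trace_mul_hessian_sub_gradient_dotProduct_gaussianFun (hS : S.IsSymm)
    (B : Matrix ι ι ℝ) (b y : ι → ℝ) :
    (1/2) * (B * Matrix.of (fun i j =>
        fderiv ℝ (fun z => fderiv ℝ (gaussianFun c S m) z (Pi.single j 1)) y (Pi.single i 1))).trace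
      - (fun i => fderiv ℝ (gaussianFun c S m) y (Pi.single i 1)) ⬝ᵥ b
      = ((1/2) * (S *ᵥ (y - m) ⬝ᵥ B *ᵥ (S *ᵥ (y - m))) - (1/2) * (B * S).trace
          + S *ᵥ (y - m) ⬝ᵥ b) * gaussianFun c S m y := by
  rw [hessian_gaussianFun hS, gradient_gaussianFun hS]
  simp only [Matrix.mul_smul, trace_smul, Matrix.mul_sub, trace_sub, mul_vecMulVec,
    trace_vecMulVec, smul_dotProduct, smul_eq_mul]
  rw [dotProduct_comm (B *ᵥ _)]
  ring

end Gaussian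

theorem Matrix.adjugate_eq_det_smul_inv {R ι : Type*} [CommRing R] [Fintype ι] [DecidableEq ι]
    {A : Matrix ι ι R} (hA : IsUnit A.det) : A.adjugate = A.det • A⁻¹ := by
  rw [inv_def, smul_smul, Ring.mul_inverse_cancel _ hA, one_smul]

section GaussianDensity
variable {ι : Type*} [Fintype ι] [DecidableEq ι] {t : ℝ}

noncomputable def gaussianDensity (Q : Matrix ι ι ℝ) (m : ι → ℝ) : (ι → ℝ) → ℝ :=
  gaussianFun ((2 * Real.pi) ^ (-(Fintype.card ι : ℝ) / 2) * Q.det ^ (-(1:ℝ)/2)) Q⁻¹ m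

theorem hasDerivAt_gaussianDensity {Q : ℝ → Matrix ι ι ℝ} {m : ℝ → ι → ℝ} {Q' : Matrix ι ι ℝ}
    {m' : ι → ℝ} (hQ : HasDerivAt Q Q' t) (hm : HasDerivAt m m' t) (hpos : 0 < (Q t).det)
    (hsymm : (Q t).IsSymm) (y : ι → ℝ) :
    HasDerivAt (fun τ => gaussianDensity (Q τ) (m τ) y)
      ((-(1/2) * ((Q t)⁻¹ * Q').trace
        + (1/2) * ((Q t)⁻¹ *ᵥ (y - m t) ⬝ᵥ Q' *ᵥ ((Q t)⁻¹ *ᵥ (y - m t)))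
        + (Q t)⁻¹ *ᵥ (y - m t) ⬝ᵥ m') * gaussianDensity (Q t) (m t) y) t := by
  have hunit : IsUnit (Q t).det := hpos.ne'.isUnit
  have hdet := hQ.matrix_det.rpow_const (p := -(1:ℝ)/2) (Or.inl hpos.ne')
  have hq := ((hQ.matrix_inv hunit).matrix_mulVec (hm.const_sub y)).dotProduct (hm.const_sub y)
  have h := (hdet.const_mul ((2 * Real.pi) ^ (-(Fintype.card ι : ℝ) / 2))).mul
    (hq.const_mul (-(1/2))).exp
  refine h.congr_deriv ?_
  set S := (Q t)⁻¹
  set v := y - m t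
  have hSdot : ∀ a b, S *ᵥ a ⬝ᵥ b = a ⬝ᵥ S *ᵥ b := fun a b => by
    rw [dotProduct_mulVec, ← mulVec_transpose, hsymm.inv.eq]
  have hquad : (-(S * Q' * S) *ᵥ v + S *ᵥ -m') ⬝ᵥ v + S *ᵥ v ⬝ᵥ -m'
      = -(S *ᵥ v ⬝ᵥ Q' *ᵥ (S *ᵥ v)) - 2 * (S *ᵥ v ⬝ᵥ m') := by
    have h1 : (S * Q' * S) *ᵥ v ⬝ᵥ v = S *ᵥ v ⬝ᵥ Q' *ᵥ (S *ᵥ v) := by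
      rw [← mulVec_mulVec, ← mulVec_mulVec, hSdot, dotProduct_comm]
    have h2 : S *ᵥ m' ⬝ᵥ v = S *ᵥ v ⬝ᵥ m' := by rw [hSdot, dotProduct_comm]
    rw [add_dotProduct, neg_mulVec, neg_dotProduct, mulVec_neg, neg_dotProduct, dotProduct_neg,
      h1, h2]
    ring
  have hpow : (Q t).det ^ (-(1:ℝ)/2 - 1) * (Q t).det = (Q t).det ^ (-(1:ℝ)/2) := by
    rw [← Real.rpow_add_one hpos.ne']; norm_num
  rw [hquad, adjugate_eq_det_smul_inv hunit, smul_mul, trace_smul, smul_eq_mul]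
  simp only [gaussianDensity, gaussianFun]
  linear_combination ((2 * Real.pi) ^ (-(Fintype.card ι : ℝ) / 2) * (S * Q').trace * (-1 / 2)
    * Real.exp (-(1 / 2) * S *ᵥ v ⬝ᵥ v)) * hpow

theorem hasDerivAt_gaussianDensity_of_lyapunov (B D : Matrix ι ι ℝ) {Q : ℝ → Matrix ι ι ℝ}
    {m : ℝ → ι → ℝ} (hQ : HasDerivAt Q (B + Dᵀ * Q t + Q t * D) t)
    (hm : HasDerivAt m (Dᵀ *ᵥ m t) t) (hpos : 0 < (Q t).det) (hsymm : (Q t).IsSymm)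
    (y : ι → ℝ) :
    HasDerivAt (fun τ => gaussianDensity (Q τ) (m τ) y)
      (((1/2) * ((Q t)⁻¹ *ᵥ (y - m t) ⬝ᵥ B *ᵥ ((Q t)⁻¹ *ᵥ (y - m t))) - (1/2) * (B * (Q t)⁻¹).trace
        + (Q t)⁻¹ *ᵥ (y - m t) ⬝ᵥ Dᵀ *ᵥ y - D.trace) * gaussianDensity (Q t) (m t) y) t := by
  have hw : Q t *ᵥ ((Q t)⁻¹ *ᵥ (y - m t)) = y - m t := by
    rw [mulVec_mulVec, mul_nonsing_inv _ hpos.ne'.isUnit, one_mulVec]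
  have hy : (Q t)⁻¹ *ᵥ (y - m t) ⬝ᵥ Dᵀ *ᵥ y
      = (Q t)⁻¹ *ᵥ (y - m t) ⬝ᵥ Dᵀ *ᵥ (y - m t) + (Q t)⁻¹ *ᵥ (y - m t) ⬝ᵥ Dᵀ *ᵥ m t := by
    rw [← dotProduct_add, ← mulVec_add, sub_add_cancel]
  refine (hasDerivAt_gaussianDensity hQ hm hpos hsymm y).congr_deriv ?_
  rw [trace_inv_mul_lyapunov B D hpos.ne'.isUnit, dotProduct_lyapunov_mulVec B D hsymm hw, hy]
  ring

end GaussianDensity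

theorem ornstein_uhlenbeck_density_solves_equation_general
    {n : ℕ} (B D : Matrix (Fin n) (Fin n) ℝ)
    (α : ℝ) (x : Fin n → ℝ)
    (Q R : ℝ → Matrix (Fin n) (Fin n) ℝ)
    (hQ : Q = fun t : ℝ => ∫ r in (0:ℝ)..t,
      NormedSpace.exp (r • Dᵀ) * B * NormedSpace.exp (r • D))
    (hQpos : ∀ t : ℝ, 0 < t → (Q t).PosDef)
    (hR : R = fun t : ℝ => NormedSpace.exp (t • Dᵀ))
    (u : ℝ → (Fin n → ℝ) → ℝ)
    (hu : u = fun (t : ℝ) (y : Fin n → ℝ) =>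
      Real.exp (α * t) * ((2 * Real.pi) ^ (-(n:ℝ)/2) * (Q t).det ^ (-(1:ℝ)/2) *
        Real.exp (-(1/2) * ((Q t)⁻¹ *ᵥ (y - R t *ᵥ x) ⬝ᵥ (y - R t *ᵥ x))))) :
    ∀ t : ℝ, 0 < t → ∀ y : Fin n → ℝ,
      deriv (fun τ : ℝ => u τ y) t =
        (1/2) * (B * Matrix.of (fun i j : Fin n =>
            fderiv ℝ (fun z : Fin n → ℝ => fderiv ℝ (u t) z (Pi.single j 1)) y
              (Pi.single i 1))).trace
          - (((fun i : Fin n => fderiv ℝ (u t) y (Pi.single i 1)) ⬝ᵥ (Dᵀ *ᵥ y))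
              + D.trace * u t y)
          + α * u t y := by
  intro t ht y
  have hsymm : (Q t).IsSymm := isHermitian_iff_isSymm.1 (hQpos t ht).isHermitian
  have hQ' : HasDerivAt Q (B + Dᵀ * Q t + Q t * D) t := by
    subst hQ
    exact hasDerivAt_integral_exp_mul_mul_exp Dᵀ B D t
  have hm' : HasDerivAt (fun τ => R τ *ᵥ x) (Dᵀ *ᵥ (R t *ᵥ x)) t := by
    subst hR
    simpa using (hasDerivAt_exp_smul_const' Dᵀ t).matrix_mulVec (hasDerivAt_const t x)
  have htime : (fun τ => u τ y)
      = fun τ => Real.exp (α * τ) * gaussianDensity (Q τ) (R τ *ᵥ x) y := by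
    simp [hu, gaussianDensity, gaussianFun, mul_assoc]
  have hspace : u t = gaussianFun (Real.exp (α * t) * ((2 * Real.pi) ^ (-(n:ℝ)/2) *
      (Q t).det ^ (-(1:ℝ)/2))) (Q t)⁻¹ (R t *ᵥ x) := by
    funext z
    simp [hu, gaussianFun, mul_assoc]
  rw [htime, ((((hasDerivAt_id' t).const_mul α).exp).fun_mul
    (hasDerivAt_gaussianDensity_of_lyapunov B D hQ' hm' (hQpos t ht).det_pos hsymm y)).deriv,
    hspace, sub_add_eq_sub_sub,
    half_trace_mul_hessian_sub_gradient_dotProduct_gaussianFun hsymm.inv]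
  simp only [gaussianDensity, gaussianFun, Fintype.card_fin]
  ring

/-- **Theorems 2 and 3 of the paper combined (finite-dimensional case, C = 0).**
With `B` symmetric positive definite, `D` arbitrary, `α : ℝ`, `x ∈ ℝⁿ`,
`Q(t) = ∫₀ᵗ e^{rDᵀ}·B·e^{rD} dr` (symmetric positive definite for `t > 0`) and
`R(t) = e^{tDᵀ}`, the density
`u(t,y) = e^{αt}(2π)^{−n/2}(det Q(t))^{−1/2}·exp(−½⟨Q(t)⁻¹(y−R(t)x), y−R(t)x⟩)` solves
`∂u/∂t = ½ tr(B·Hess_y u) − (⟨∇_y u, Dᵀy⟩ + tr(D)·u) + αu` for all `t > 0`, `y ∈ ℝⁿ`. -/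
theorem ornstein_uhlenbeck_density_solves_equation
    {n : ℕ} (B D : Matrix (Fin n) (Fin n) ℝ)
    (hBsymm : B.IsSymm) (hBpos : B.PosDef) (α : ℝ) (x : Fin n → ℝ)
    (Q R : ℝ → Matrix (Fin n) (Fin n) ℝ)
    (hQ : Q = fun t : ℝ => ∫ r in (0:ℝ)..t,
      NormedSpace.exp (r • Dᵀ) * B * NormedSpace.exp (r • D))
    (hQpos : ∀ t : ℝ, 0 < t → (Q t).PosDef)
    (hR : R = fun t : ℝ => NormedSpace.exp (t • Dᵀ))
    (u : ℝ → (Fin n → ℝ) → ℝ)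
    (hu : u = fun (t : ℝ) (y : Fin n → ℝ) =>
      Real.exp (α * t) * ((2 * Real.pi) ^ (-(n:ℝ)/2) * (Q t).det ^ (-(1:ℝ)/2) *
        Real.exp (-(1/2) * ((Q t)⁻¹ *ᵥ (y - R t *ᵥ x) ⬝ᵥ (y - R t *ᵥ x))))) :
    ∀ t : ℝ, 0 < t → ∀ y : Fin n → ℝ,
      deriv (fun τ : ℝ => u τ y) t =
        (1/2) * (B * Matrix.of (fun i j : Fin n =>
            fderiv ℝ (fun z : Fin n → ℝ => fderiv ℝ (u t) z (Pi.single j 1)) y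
              (Pi.single i 1))).trace
          - (((fun i : Fin n => fderiv ℝ (u t) y (Pi.single i 1)) ⬝ᵥ (Dᵀ *ᵥ y))
              + D.trace * u t y)
          + α * u t y :=
  ornstein_uhlenbeck_density_solves_equation_general B D α x Q R hQ hQpos hR u hu
end
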